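/- arXiv:1808.08570 — 3 statements merged into one kernel-verified Lean document; each statement's English description precedes it below -/
import Mathlib

section
/- The ℂ-vector space Ω¹_R, for R = ℂ[t,t⁻¹,u] with uᵐ = k(t) = Σᵢ₌₀ᵈ aᵢtⁱ monic of degree d, is spanned by the elements tⁱuᵏ·dt (i ∈ ℤ, 0 ≤ k ≤ m-1) together with tʲuˡ·du (0 ≤ j ≤ d-1, 0 ≤ l ≤ m-2), where the elements uˡ·du (j = 0) may be omitted when a₀ = 0. -/
/-!
`Ω¹_R` is generated over `R` by `dt` and `du`, and `R` is spanned over `ℂ` by the `tⁱuˡ` with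
`l < m`, so `Ω¹_R` is spanned by the forms `tⁱuˡ dt` and `tⁱuˡ du`. Differentiating `uᵐ = k(t)`
gives `m uᵐ⁻¹ du = k'(t) dt`, which takes care of `l = m - 1`, and for `l ≤ m - 2` it shows that
`k(t) tˢuˡ du = tˢuˡ⁺¹ · uᵐ⁻¹ du` lies in the span of the `dt`-forms. It then suffices that
`ℂ[t,t⁻¹]` is spanned by the multiples of `k` and the `tʲ` with `ord₀ k ≤ j < deg k`; this span
is stable under multiplication by `t` and `t⁻¹`, because `k` and `t⁻¹k` express `t^(deg k)` and
`t^(ord₀ k - 1)` through the monomials in between. Finally `ord₀ k ≥ 1` when `a₀ = 0`.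
-/

noncomputable section

abbrev LA : Type := LaurentPolynomial ℂ

/-- The superelliptic ring `R = ℂ[t,t⁻¹,u]` with `u^m = k(t)`. -/
abbrev SER (m : ℕ) (k : Polynomial ℂ) : Type :=
  AdjoinRoot ((Polynomial.X : Polynomial LA) ^ m - Polynomial.C k.toLaurent)

/-- `t^i ∈ R` for `i : ℤ`. -/
def tpow (m : ℕ) (k : Polynomial ℂ) (i : ℤ) : SER m k :=
  AdjoinRoot.of _ (LaurentPolynomial.T i)

/-- `u ∈ R`. -/
def uu (m : ℕ) (k : Polynomial ℂ) : SER m k := AdjoinRoot.root _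

/-- The universal derivation `d : R → Ω¹_{R/ℂ}`. -/
def Dd (m : ℕ) (k : Polynomial ℂ) :
    Derivation ℂ (SER m k) (KaehlerDifferential ℂ (SER m k)) :=
  KaehlerDifferential.D ℂ (SER m k)

/-- The subspace `dR ⊆ Ω¹_R` of exact differentials. -/
def dR (m : ℕ) (k : Polynomial ℂ) : Submodule ℂ (KaehlerDifferential ℂ (SER m k)) :=
  LinearMap.range (Dd m k).toLinearMap

/-- The quotient `Ω¹_R / dR`. -/
abbrev OmQ (m : ℕ) (k : Polynomial ℂ) := KaehlerDifferential ℂ (SER m k) ⧸ dR m k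

/-- The class of a differential in `Ω¹_R / dR`. -/
def cl (m : ℕ) (k : Polynomial ℂ) (w : KaehlerDifferential ℂ (SER m k)) : OmQ m k :=
  Submodule.Quotient.mk w

/-- The polynomial `k(t) = Σ_{i=0}^d a_i t^i`. -/
def kpoly (d : ℕ) (a : ℕ → ℂ) : Polynomial ℂ :=
  ∑ i ∈ Finset.range (d + 1), Polynomial.C (a i) * Polynomial.X ^ i

open Polynomial LaurentPolynomial

namespace LaurentPolynomial

variable {K : Type*} [Field K]

theorem span_range_T : Submodule.span K (Set.range (T : ℤ → K[T;T⁻¹])) = ⊤ := by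
  refine eq_top_iff.2 fun p _ => ?_
  induction p using LaurentPolynomial.induction_on' with
  | add p q hp hq => exact add_mem (hp trivial) (hq trivial)
  | C_mul_T n c =>
    rw [← smul_eq_C_mul]
    exact Submodule.smul_mem _ c (Submodule.subset_span ⟨n, rfl⟩)

theorem toLaurent_mul_T_eq_sum (k : K[X]) (n : ℤ) :
    toLaurent k * T n = ∑ i ∈ k.support, k.coeff i • T (n + i) := by
  conv_lhs => rw [k.as_sum_support]
  simp only [map_sum, Finset.sum_mul, Polynomial.toLaurent_C_mul_T, smul_eq_C_mul, mul_assoc,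
    ← T_add, add_comm n]

theorem T_add_mem_of_coeff_ne_zero {W : Submodule K K[T;T⁻¹]} {k : K[X]} {n : ℤ}
    (hk : toLaurent k * T n ∈ W) {j : ℕ} (hj : k.coeff j ≠ 0)
    (h : ∀ i ∈ k.support, i ≠ j → T (n + i) ∈ W) : T (n + j) ∈ W := by
  rw [toLaurent_mul_T_eq_sum, ← Finset.add_sum_erase _ _ (mem_support_iff.2 hj)] at hk
  refine (W.smul_mem_iff hj).1 ((W.add_mem_iff_left (W.sum_mem fun i hi => ?_)).1 hk)
  obtain ⟨hij, hi⟩ := Finset.mem_erase.1 hi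
  exact W.smul_mem _ (h i hi hij)

theorem eq_top_of_T_mul_mem {W : Submodule K K[T;T⁻¹]} (hone : ∀ p ∈ W, T 1 * p ∈ W)
    (hneg_one : ∀ p ∈ W, T (-1) * p ∈ W) {n₀ : ℤ} (hn₀ : T n₀ ∈ W) : W = ⊤ := by
  have hT (n : ℤ) : ∀ p ∈ W, T n * p ∈ W := by
    induction n using Int.induction_on with
    | zero => simpa only [T_zero, one_mul] using fun p hp => hp
    | succ n ih =>
      intro p hp
      rw [T_add, mul_comm (T _) (T 1), mul_assoc]
      exact hone _ (ih p hp)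
    | pred n ih =>
      intro p hp
      rw [sub_eq_add_neg, T_add, mul_comm (T _) (T (-1)), mul_assoc]
      exact hneg_one _ (ih p hp)
  refine eq_top_iff.2 (span_range_T (K := K) ▸ Submodule.span_le.2 ?_)
  rintro _ ⟨n, rfl⟩
  simpa only [SetLike.mem_coe, ← T_add, sub_add_cancel] using hT (n - n₀) _ hn₀

theorem span_toLaurent_mul_T_union_T_eq_top {k : K[X]} (hk : k ≠ 0) :
    Submodule.span K (Set.range (fun s : ℤ => toLaurent k * T s) ∪
      (fun j : ℕ => T (j : ℤ)) '' Set.Ico k.natTrailingDegree k.natDegree) = ⊤ := by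
  set W := Submodule.span K (Set.range (fun s : ℤ => toLaurent k * T s) ∪
      (fun j : ℕ => T (j : ℤ)) '' Set.Ico k.natTrailingDegree k.natDegree)
  have hkW (s : ℤ) : toLaurent k * T s ∈ W := Submodule.subset_span (.inl ⟨s, rfl⟩)
  have hTW {j : ℕ} (h₁ : k.natTrailingDegree ≤ j) (h₂ : j < k.natDegree) : T j ∈ W :=
    Submodule.subset_span (.inr ⟨j, ⟨h₁, h₂⟩, rfl⟩)
  have hTdeg : T k.natDegree ∈ W := by
    simpa using T_add_mem_of_coeff_ne_zero (n := 0) (hkW 0) (leadingCoeff_ne_zero.2 hk)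
      fun i hi hne => by
        simpa using hTW (natTrailingDegree_le_of_mem_supp i hi)
          ((le_natDegree_of_mem_supp i hi).lt_of_ne hne)
  have hTtrail : T ((k.natTrailingDegree : ℤ) - 1) ∈ W := by
    rw [sub_eq_neg_add]
    refine T_add_mem_of_coeff_ne_zero (hkW (-1)) (trailingCoeff_nonzero_iff_nonzero.2 hk)
      fun i hi hne => ?_
    have h₁ := (natTrailingDegree_le_of_mem_supp i hi).lt_of_ne' hne
    rw [show -1 + (i : ℤ) = ((i - 1 : ℕ) : ℤ) by omega]
    exact hTW (by omega) (by have := le_natDegree_of_mem_supp i hi; omega)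
  have hstable (x : ℤ) (hx : ∀ j : ℕ, k.natTrailingDegree ≤ j → j < k.natDegree → T (x + j) ∈ W)
      : ∀ p ∈ W, T x * p ∈ W := by
    refine fun p hp => (Submodule.span_le (p := W.comap (LinearMap.mulLeft K (T x)))).2 ?_ hp
    rintro _ (⟨s, rfl⟩ | ⟨j, ⟨h₁, h₂⟩, rfl⟩) <;>
      simp only [SetLike.mem_coe, Submodule.mem_comap, LinearMap.mulLeft_apply]
    · rw [mul_left_comm, ← T_add]; exact hkW (x + s)
    · rw [← T_add]; exact hx j h₁ h₂
  have hstable_T_one := hstable 1 fun j h₁ h₂ => by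
    rcases Nat.lt_or_ge (j + 1) k.natDegree with h | h
    · rw [show (1 : ℤ) + j = ((j + 1 : ℕ) : ℤ) by push_cast; ring]
      exact hTW (by omega) h
    · rw [show (1 : ℤ) + j = k.natDegree by omega]
      exact hTdeg
  have hstable_T_neg_one := hstable (-1) fun j h₁ h₂ => by
    rcases h₁.lt_or_eq with h | h
    · rw [show -1 + (j : ℤ) = ((j - 1 : ℕ) : ℤ) by omega]
      exact hTW (by omega) (by omega)
    · rw [← h, ← sub_eq_neg_add]; exact hTtrail
  exact eq_top_of_T_mul_mem hstable_T_one hstable_T_neg_one hTdeg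

end LaurentPolynomial

section Superelliptic

variable (m : ℕ) (k : ℂ[X])

theorem tpow_add (i j : ℤ) : tpow m k (i + j) = tpow m k i * tpow m k j := by
  rw [tpow, T_add, map_mul]; rfl

theorem tpow_zero : tpow m k 0 = 1 := by
  rw [tpow, T_zero, map_one]

theorem tpow_natCast (n : ℕ) : tpow m k n = tpow m k 1 ^ n := by
  rw [tpow, tpow, ← map_pow, T_pow, mul_one]

theorem algebraMap_toLaurent (q : ℂ[X]) :
    algebraMap LA (SER m k) (toLaurent q) = aeval (tpow m k 1) q := by
  induction q using Polynomial.induction_on' with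
  | add p q hp hq => rw [map_add, map_add, hp, hq, map_add]
  | monomial n c =>
    rw [toLaurent_C_mul_T, map_mul, aeval_monomial, ← tpow_natCast]
    rfl

theorem uu_pow : uu m k ^ m = aeval (tpow m k 1) k := by
  rw [← algebraMap_toLaurent, AdjoinRoot.algebraMap_eq, ← sub_eq_zero, uu, ← AdjoinRoot.mk_X,
    ← map_pow, AdjoinRoot.of, RingHom.comp_apply, ← map_sub]
  exact AdjoinRoot.mk_self

theorem natCast_smul_uu_pow_pred_smul_Dd_uu :
    (m : ℂ) • (uu m k ^ (m - 1) • Dd m k (uu m k)) =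
      aeval (tpow m k 1) (derivative k) • Dd m k (tpow m k 1) := by
  rw [Nat.cast_smul_eq_nsmul, ← Derivation.leibniz_pow, uu_pow, Derivation.map_aeval]

theorem span_tpow_mul_uu_pow (hm : m ≠ 0) :
    Submodule.span ℂ {r : SER m k | ∃ (i : ℤ) (l : ℕ), l < m ∧ r = tpow m k i * uu m k ^ l} = ⊤ := by
  have hmonic := monic_X_pow_sub_C (toLaurent k) hm
  have hspan := (AdjoinRoot.powerBasis' hmonic).basis.span_eq
  rw [PowerBasis.coe_basis, AdjoinRoot.powerBasis'_gen, AdjoinRoot.powerBasis'_dim,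
    natDegree_X_pow_sub_C] at hspan
  have := Submodule.span_smul_of_span_eq_top (span_range_T (K := ℂ))
    (Set.range fun l : Fin m => uu m k ^ (l : ℕ))
  rw [uu, hspan, Submodule.restrictScalars_top] at this
  refine eq_top_iff.2 (this ▸ Submodule.span_mono ?_)
  rintro _ ⟨_, ⟨i, rfl⟩, _, ⟨l, rfl⟩, rfl⟩
  exact ⟨i, l, l.2, Algebra.smul_def _ _⟩

variable {m k}

theorem map_mem_of_forall_tpow_mul_uu_pow (hm : m ≠ 0) {M : Type*} [AddCommGroup M] [Module ℂ M]
    (f : SER m k →ₗ[ℂ] M) {N : Submodule ℂ M}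
    (h : ∀ (i : ℤ) (l : ℕ), l < m → f (tpow m k i * uu m k ^ l) ∈ N) (r : SER m k) : f r ∈ N := by
  have hle : Submodule.span ℂ {r : SER m k | ∃ (i : ℤ) (l : ℕ), l < m ∧ r = tpow m k i * uu m k ^ l}
      ≤ N.comap f := by
    refine Submodule.span_le.2 ?_
    rintro _ ⟨i, l, hl, rfl⟩
    exact h i l hl
  rw [span_tpow_mul_uu_pow m k hm] at hle
  exact hle trivial

theorem smul_mem_of_forall_tpow_mul_uu_pow_smul_mem (hm : m ≠ 0)
    {N : Submodule ℂ (KaehlerDifferential ℂ (SER m k))} {ω : KaehlerDifferential ℂ (SER m k)}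
    (h : ∀ (i : ℤ) (l : ℕ), l < m → (tpow m k i * uu m k ^ l) • ω ∈ N) (r : SER m k) :
    r • ω ∈ N :=
  map_mem_of_forall_tpow_mul_uu_pow hm ((LinearMap.toSpanSingleton _ _ ω).restrictScalars ℂ) h r

variable (m k)

theorem Dd_tpow_mem_span (i : ℤ) :
    Dd m k (tpow m k i) ∈ Submodule.span (SER m k) {Dd m k (tpow m k 1)} := by
  have hnat (n : ℕ) : Dd m k (tpow m k n) ∈ Submodule.span (SER m k) {Dd m k (tpow m k 1)} := by
    rw [tpow_natCast, Derivation.leibniz_pow]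
    exact Submodule.smul_of_tower_mem _ _
      (Submodule.smul_mem _ _ (Submodule.mem_span_singleton_self _))
  obtain ⟨n, rfl | rfl⟩ := Int.eq_nat_or_neg i
  · exact hnat n
  · rw [(Dd m k).leibniz_of_mul_eq_one (a := tpow m k (-n)) (b := tpow m k n)
      (by rw [← tpow_add, neg_add_cancel, tpow_zero])]
    exact Submodule.smul_mem _ _ (hnat n)

theorem span_Dd_tpow_one_Dd_uu_eq_top (hm : m ≠ 0) :
    Submodule.span (SER m k) {Dd m k (tpow m k 1), Dd m k (uu m k)} = ⊤ := by
  rw [eq_top_iff, ← KaehlerDifferential.span_range_derivation, Submodule.span_le]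
  rintro _ ⟨r, rfl⟩
  refine map_mem_of_forall_tpow_mul_uu_pow hm (Dd m k).toLinearMap
    (N := (Submodule.span (SER m k) {Dd m k (tpow m k 1), Dd m k (uu m k)}).restrictScalars ℂ)
    (fun i l _ => ?_) r
  rw [Submodule.restrictScalars_mem, Derivation.coeFn_coe, Derivation.leibniz, Derivation.leibniz_pow]
  refine add_mem (Submodule.smul_mem _ _ (Submodule.smul_of_tower_mem _ _
    (Submodule.smul_mem _ _ (Submodule.subset_span (by simp))))) (Submodule.smul_mem _ _ ?_)
  exact Submodule.span_mono (by simp) (Dd_tpow_mem_span m k i)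

def monomialForms : Set (KaehlerDifferential ℂ (SER m k)) :=
  {ω | ∃ (i : ℤ) (l : ℕ), l ≤ m - 1 ∧ ω = (tpow m k i * uu m k ^ l) • Dd m k (tpow m k 1)} ∪
    {ω | ∃ (j l : ℕ), k.natTrailingDegree ≤ j ∧ j < k.natDegree ∧ l ≤ m - 2 ∧
      ω = (tpow m k j * uu m k ^ l) • Dd m k (uu m k)}

variable {m k}

theorem smul_Dd_tpow_one_mem_span_monomialForms (hm : m ≠ 0) (r : SER m k) :
    r • Dd m k (tpow m k 1) ∈ Submodule.span ℂ (monomialForms m k) :=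
  smul_mem_of_forall_tpow_mul_uu_pow_smul_mem hm
    (fun i l hl => Submodule.subset_span (.inl ⟨i, l, by omega, rfl⟩)) r

theorem mul_uu_pow_pred_smul_Dd_uu_mem_span_monomialForms (hm : m ≠ 0) (r : SER m k) :
    (r * uu m k ^ (m - 1)) • Dd m k (uu m k) ∈ Submodule.span ℂ (monomialForms m k) := by
  have hmC : (m : ℂ) ≠ 0 := Nat.cast_ne_zero.2 hm
  rw [mul_smul, ← inv_smul_smul₀ hmC (uu m k ^ (m - 1) • _), natCast_smul_uu_pow_pred_smul_Dd_uu,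
    smul_comm r, smul_smul]
  exact Submodule.smul_mem _ _ (smul_Dd_tpow_one_mem_span_monomialForms hm _)

theorem algebraMap_mul_uu_pow_smul_Dd_uu_mem_span_monomialForms (hm : m ≠ 0) (hk : k ≠ 0)
    {l : ℕ} (hl : l < m - 1) (p : LA) :
    (algebraMap LA (SER m k) p * uu m k ^ l) • Dd m k (uu m k) ∈
      Submodule.span ℂ (monomialForms m k) := by
  have hle : Submodule.span ℂ (Set.range (fun s : ℤ => toLaurent k * T s) ∪
      (fun j : ℕ => T (j : ℤ)) '' Set.Ico k.natTrailingDegree k.natDegree) ≤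
      (Submodule.span ℂ (monomialForms m k)).comap
        (((LinearMap.toSpanSingleton _ _ (uu m k ^ l • Dd m k (uu m k))).restrictScalars ℂ) ∘ₗ
          (IsScalarTower.toAlgHom ℂ LA (SER m k)).toLinearMap) := by
    refine Submodule.span_le.2 ?_
    rintro _ (⟨s, rfl⟩ | ⟨j, ⟨h₁, h₂⟩, rfl⟩)
    · show algebraMap LA (SER m k) (toLaurent k * T s) • uu m k ^ l • Dd m k (uu m k) ∈
        Submodule.span ℂ (monomialForms m k)
      have hu : uu m k ^ m = uu m k * uu m k ^ (m - 1) := by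
        rw [← pow_succ', Nat.sub_add_cancel (Nat.one_le_iff_ne_zero.2 hm)]
      rw [smul_smul, map_mul, algebraMap_toLaurent, ← uu_pow, hu]
      convert mul_uu_pow_pred_smul_Dd_uu_mem_span_monomialForms hm
        (tpow m k s * uu m k ^ (l + 1)) using 2
      rw [tpow, ← AdjoinRoot.algebraMap_eq]
      ring
    · show algebraMap LA (SER m k) (T j) • uu m k ^ l • Dd m k (uu m k) ∈
        Submodule.span ℂ (monomialForms m k)
      rw [smul_smul]
      exact Submodule.subset_span (.inr ⟨j, l, h₁, h₂, by omega, rfl⟩)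
  rw [span_toLaurent_mul_T_union_T_eq_top hk] at hle
  simpa [mul_smul] using hle (Submodule.mem_top (x := p))

theorem smul_Dd_uu_mem_span_monomialForms (hm : m ≠ 0) (hk : k ≠ 0) (r : SER m k) :
    r • Dd m k (uu m k) ∈ Submodule.span ℂ (monomialForms m k) := by
  refine smul_mem_of_forall_tpow_mul_uu_pow_smul_mem hm (fun i l hl => ?_) r
  rcases Nat.lt_or_ge l (m - 1) with hl' | hl'
  · exact algebraMap_mul_uu_pow_smul_Dd_uu_mem_span_monomialForms hm hk hl' (T i)
  · rw [show l = m - 1 by omega]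
    exact mul_uu_pow_pred_smul_Dd_uu_mem_span_monomialForms hm _

theorem span_monomialForms_eq_top (hm : m ≠ 0) (hk : k ≠ 0) :
    Submodule.span ℂ (monomialForms m k) = ⊤ := by
  refine eq_top_iff.2 fun ω _ => ?_
  obtain ⟨r, s, rfl⟩ := Submodule.mem_span_pair.1
    ((span_Dd_tpow_one_Dd_uu_eq_top m k hm).symm ▸ Submodule.mem_top (x := ω))
  exact add_mem (smul_Dd_tpow_one_mem_span_monomialForms hm r)
    (smul_Dd_uu_mem_span_monomialForms hm hk s)

end Superelliptic

theorem coeff_kpoly {d i : ℕ} (a : ℕ → ℂ) (hi : i ≤ d) : (kpoly d a).coeff i = a i := by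
  simp [kpoly, hi]

theorem natDegree_kpoly_le (d : ℕ) (a : ℕ → ℂ) : (kpoly d a).natDegree ≤ d :=
  natDegree_sum_le_of_forall_le _ _ fun _ hi =>
    (natDegree_C_mul_X_pow_le _ _).trans (Nat.lt_succ_iff.1 (Finset.mem_range.1 hi))

theorem stmt4_general (m : ℕ) (hm : 2 ≤ m) (d : ℕ) (a : ℕ → ℂ)
    (had : a d = 1) :
    (Submodule.span ℂ
      ({ω | ∃ (i : ℤ) (l : ℕ), l ≤ m - 1 ∧
          ω = (tpow m (kpoly d a) i * uu m (kpoly d a) ^ l) •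
            Dd m (kpoly d a) (tpow m (kpoly d a) 1)} ∪
       {ω | ∃ (j l : ℕ), j ≤ d - 1 ∧ l ≤ m - 2 ∧
          ω = (tpow m (kpoly d a) (j : ℤ) * uu m (kpoly d a) ^ l) •
            Dd m (kpoly d a) (uu m (kpoly d a))}) = ⊤)
    ∧ (a 0 = 0 →
      Submodule.span ℂ
      ({ω | ∃ (i : ℤ) (l : ℕ), l ≤ m - 1 ∧
          ω = (tpow m (kpoly d a) i * uu m (kpoly d a) ^ l) •
            Dd m (kpoly d a) (tpow m (kpoly d a) 1)} ∪
       {ω | ∃ (j l : ℕ), 1 ≤ j ∧ j ≤ d - 1 ∧ l ≤ m - 2 ∧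
          ω = (tpow m (kpoly d a) (j : ℤ) * uu m (kpoly d a) ^ l) •
            Dd m (kpoly d a) (uu m (kpoly d a))}) = ⊤) := by
  have hk : kpoly d a ≠ 0 := fun h => by
    simpa [h, had] using coeff_kpoly a (le_refl d)
  have hdeg := natDegree_kpoly_le d a
  have hspan := span_monomialForms_eq_top (m := m) (by omega) hk
  refine ⟨eq_top_iff.2 (hspan ▸ Submodule.span_mono ?_),
    fun ha₀ => eq_top_iff.2 (hspan ▸ Submodule.span_mono ?_)⟩
  · rintro ω (h | ⟨j, l, -, hj, hl, rfl⟩)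
    exacts [.inl h, .inr ⟨j, l, by omega, hl, rfl⟩]
  · have htrail : 1 ≤ (kpoly d a).natTrailingDegree :=
      Nat.one_le_iff_ne_zero.2 fun h => (natTrailingDegree_eq_zero.1 h).elim hk
        fun h₀ => h₀ (by rw [coeff_kpoly a (Nat.zero_le d), ha₀])
    rintro ω (h | ⟨j, l, hj₀, hj, hl, rfl⟩)
    exacts [.inl h, .inr ⟨j, l, by omega, by omega, hl, rfl⟩]

theorem stmt4 (m : ℕ) (hm : 2 ≤ m) (d : ℕ) (hd : 1 ≤ d) (a : ℕ → ℂ)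
    (had : a d = 1) (h01 : ¬(a 0 = 0 ∧ a 1 = 0)) :
    (Submodule.span ℂ
      ({ω | ∃ (i : ℤ) (l : ℕ), l ≤ m - 1 ∧
          ω = (tpow m (kpoly d a) i * uu m (kpoly d a) ^ l) •
            Dd m (kpoly d a) (tpow m (kpoly d a) 1)} ∪
       {ω | ∃ (j l : ℕ), j ≤ d - 1 ∧ l ≤ m - 2 ∧
          ω = (tpow m (kpoly d a) (j : ℤ) * uu m (kpoly d a) ^ l) •
            Dd m (kpoly d a) (uu m (kpoly d a))}) = ⊤)
    ∧ (a 0 = 0 →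
      Submodule.span ℂ
      ({ω | ∃ (i : ℤ) (l : ℕ), l ≤ m - 1 ∧
          ω = (tpow m (kpoly d a) i * uu m (kpoly d a) ^ l) •
            Dd m (kpoly d a) (tpow m (kpoly d a) 1)} ∪
       {ω | ∃ (j l : ℕ), 1 ≤ j ∧ j ≤ d - 1 ∧ l ≤ m - 2 ∧
          ω = (tpow m (kpoly d a) (j : ℤ) * uu m (kpoly d a) ^ l) •
            Dd m (kpoly d a) (uu m (kpoly d a))}) = ⊤) :=
  stmt4_general m hm d a had
end
end

section
/- In Ω¹_R/dR for R = ℂ[t,t⁻¹,u] with uᵐ = k(t) = Σₖ₌₀ᵈ aₖtᵏ monic of degree d, for every j ∈ ℤ one has ((m+1)d + mj)·tᵈ⁺ʲ⁻¹u·dt ≡ -Σₖ₌₀^{d-1} ((m+1)k + mj)·aₖ·tᵏ⁺ʲ⁻¹u·dt modulo dR. -/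
/-!
Since `u ^ (m + 1) = k(t) u`, the element `f = t^j k(t) u` can be differentiated in two ways, and
`(m + 1) d(t^j k u) - d(t^j u^(m+1)) = m df` loses all `du`-terms: it equals
`(m + 1) u d(t^j k) - k u d(t^j) = ∑ᵢ ((m + 1) i + m j) aᵢ t^(i+j-1) u dt`.
This form is therefore exact, and splitting off its top term `a_d = 1` gives the relation.
-/
noncomputable section

namespace Derivation

variable {R A M : Type*} [CommRing R] [CommRing A] [Algebra R A] [AddCommGroup M] [Module A M]
  [Module R M] (D : Derivation R A M)

theorem leibniz_of_map_add_eq_mul {f : ℤ → A} (h0 : f 0 = 1)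
    (hadd : ∀ i j, f (i + j) = f i * f j) (n : ℤ) :
    D (f n) = n • f (n - 1) • D (f 1) := by
  set E : ℤ → M := fun n => D (f n) - n • f (n - 1) • D (f 1) with hE
  have hstep (n : ℤ) : E (n + 1) = f 1 • E n := by
    have hn : f 1 * f (n - 1) = f n := by rw [← hadd, add_sub_cancel]
    simp only [hE, add_sub_cancel_right, hadd n 1, leibniz]
    rw [smul_sub, smul_comm (f 1) (n : ℤ), smul_smul, hn]
    module
  have hunit : f (-1) * f 1 = 1 := by rw [← hadd, neg_add_cancel, h0]
  suffices ∀ n, E n = 0 from sub_eq_zero.1 (this n)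
  intro n
  induction n using Int.induction_on with
  | zero => simp [hE, h0]
  | succ n ih => rw [hstep, ih, smul_zero]
  | pred n ih =>
    rw [← one_smul A (E _), ← hunit, mul_smul, ← hstep, sub_add_cancel, ih, smul_zero]

theorem nsmul_map_mul_mul_of_pow_eq {m : ℕ} {u g : A} (hu : u ^ m = g) (h : A) :
    m • D (h * g * u) = (m + 1) • u • D (h * g) - (g * u) • D h := by
  have hpow : h * g * u = h * u ^ (m + 1) := by rw [← hu]; ring
  calc m • D (h * g * u) = (m + 1) • D (h * g * u) - D (h * u ^ (m + 1)) := by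
        rw [← hpow, add_smul, one_smul, add_sub_cancel_right]
    _ = _ := by
        rw [D.leibniz (h * g) u, D.leibniz h (u ^ (m + 1)), leibniz_pow, Nat.add_sub_cancel, hu,
          pow_succ, hu]
        module

end Derivation

namespace SER

variable (m : ℕ) (k : Polynomial ℂ)

theorem tpow_zero : tpow m k 0 = 1 := by
  rw [tpow, LaurentPolynomial.T_zero, map_one]

theorem tpow_add (i j : ℤ) : tpow m k (i + j) = tpow m k i * tpow m k j := by
  rw [tpow, LaurentPolynomial.T_add, map_mul]; rfl

theorem Dd_tpow (i : ℤ) :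
    Dd m k (tpow m k i) = (i : ℂ) • tpow m k (i - 1) • Dd m k (tpow m k 1) := by
  rw [(Dd m k).leibniz_of_map_add_eq_mul (tpow_zero m k) (tpow_add m k), Int.cast_smul_eq_zsmul]

theorem uu_pow : uu m k ^ m = AdjoinRoot.of _ k.toLaurent := by
  have h := AdjoinRoot.mk_self (f := (Polynomial.X : Polynomial LA) ^ m - Polynomial.C k.toLaurent)
  rwa [map_sub, map_pow, sub_eq_zero] at h

theorem of_toLaurent_kpoly (d : ℕ) (a : ℕ → ℂ) :
    (AdjoinRoot.of _ (kpoly d a).toLaurent : SER m k)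
      = ∑ i ∈ Finset.range (d + 1), a i • tpow m k i := by
  simp only [kpoly, map_sum, map_mul, Polynomial.toLaurent_C, Polynomial.toLaurent_X_pow,
    LaurentPolynomial.C_eq_algebraMap, AdjoinRoot.of, Algebra.smul_def]
  rfl

theorem monomial_combination (i j : ℤ) :
    ((m : ℂ) + 1) • uu m k • Dd m k (tpow m k j * tpow m k i)
        - (tpow m k i * uu m k) • Dd m k (tpow m k j)
      = (((m : ℂ) + 1) * i + m * j) • (tpow m k (i + j - 1) * uu m k) • Dd m k (tpow m k 1) := by
  have hexp : tpow m k (j + i - 1) = tpow m k (i + j - 1) := by rw [add_comm j]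
  have hmul : tpow m k i * uu m k * tpow m k (j - 1) = tpow m k (i + j - 1) * uu m k := by
    rw [add_sub_assoc, tpow_add]; ring
  rw [← tpow_add, Dd_tpow m k (j + i), Dd_tpow m k j, smul_comm (uu m k),
    smul_comm (tpow m k i * uu m k), smul_smul (uu m k), smul_smul (tpow m k i * uu m k), hmul,
    mul_comm (uu m k), hexp]
  module

theorem sum_smul_mem_dR (d : ℕ) (a : ℕ → ℂ) (j : ℤ) :
    ∑ i ∈ Finset.range (d + 1), ((((m : ℂ) + 1) * i + m * j) * a i) •
        ((tpow m (kpoly d a) ((i : ℤ) + j - 1) * uu m (kpoly d a)) •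
          Dd m (kpoly d a) (tpow m (kpoly d a) 1)) ∈ dR m (kpoly d a) := by
  set K := kpoly d a
  have hsum : ∑ i ∈ Finset.range (d + 1), ((((m : ℂ) + 1) * i + m * j) * a i) •
        ((tpow m K ((i : ℤ) + j - 1) * uu m K) • Dd m K (tpow m K 1))
      = m • Dd m K (tpow m K j * AdjoinRoot.of _ K.toLaurent * uu m K) := by
    rw [(Dd m K).nsmul_map_mul_mul_of_pow_eq (uu_pow m K), of_toLaurent_kpoly]
    simp only [Finset.mul_sum, Finset.sum_mul, map_sum, Finset.smul_sum, Finset.sum_smul,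
      ← Finset.sum_sub_distrib, mul_smul_comm, smul_mul_assoc]
    refine Finset.sum_congr rfl fun i _ => ?_
    have hi := monomial_combination m K i j
    push_cast at hi
    rw [Derivation.map_smul, smul_assoc, smul_comm (uu m K) (a i), ← Nat.cast_smul_eq_nsmul ℂ,
      smul_comm _ (a i), ← smul_sub, Nat.cast_add, Nat.cast_one, hi]
    module
  rw [hsum]
  exact Submodule.smul_of_tower_mem _ m ⟨_, rfl⟩

end SER

theorem stmt12_general (m : ℕ) (d : ℕ) (a : ℕ → ℂ) (had : a d = 1) (j : ℤ) :
    (((m : ℂ) + 1) * (d : ℂ) + (m : ℂ) * (j : ℂ)) •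
        cl m (kpoly d a)
          ((tpow m (kpoly d a) ((d : ℤ) + j - 1) * uu m (kpoly d a)) •
            Dd m (kpoly d a) (tpow m (kpoly d a) 1))
      = -∑ k ∈ Finset.range d,
          ((((m : ℂ) + 1) * (k : ℂ) + (m : ℂ) * (j : ℂ)) * a k) •
            cl m (kpoly d a)
              ((tpow m (kpoly d a) ((k : ℤ) + j - 1) * uu m (kpoly d a)) •
                Dd m (kpoly d a) (tpow m (kpoly d a) 1)) := by
  have h := (Submodule.Quotient.mk_eq_zero _).2 (SER.sum_smul_mem_dR m d a j)
  rw [← Submodule.mkQ_apply, map_sum, Finset.sum_range_succ, had, mul_one] at h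
  simp only [map_smul, Submodule.mkQ_apply] at h
  exact eq_neg_of_add_eq_zero_right h

theorem stmt12 (m : ℕ) (hm : 2 ≤ m) (d : ℕ) (a : ℕ → ℂ) (had : a d = 1) (j : ℤ) :
    (((m : ℂ) + 1) * (d : ℂ) + (m : ℂ) * (j : ℂ)) •
        cl m (kpoly d a)
          ((tpow m (kpoly d a) ((d : ℤ) + j - 1) * uu m (kpoly d a)) •
            Dd m (kpoly d a) (tpow m (kpoly d a) 1))
      = -∑ k ∈ Finset.range d,
          ((((m : ℂ) + 1) * (k : ℂ) + (m : ℂ) * (j : ℂ)) * a k) •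
            cl m (kpoly d a)
              ((tpow m (kpoly d a) ((k : ℤ) + j - 1) * uu m (kpoly d a)) •
                Dd m (kpoly d a) (tpow m (kpoly d a) 1)) :=
  stmt12_general m d a had j
end
end

section
/- For the 3-point ring R = ℂ[t,t⁻¹,u] with u² = t² + 4t, the classes of t⁻¹dt and t⁻¹u·dt form a ℂ-basis of Ω¹_R/dR; in particular dim_ℂ Ω¹_R/dR = 2. -/
noncomputable section

/-- The 3-point polynomial `t² + 4t`. -/
def threePt : Polynomial ℂ := Polynomial.X ^ 2 + Polynomial.C 4 * Polynomial.X

/-- The family `[t⁻¹dt], [t⁻¹u dt]`. -/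
def threePtFam : Fin 2 → OmQ 2 threePt :=
  ![cl 2 threePt (tpow 2 threePt (-1) • Dd 2 threePt (tpow 2 threePt 1)),
    cl 2 threePt ((tpow 2 threePt (-1) * uu 2 threePt) •
      Dd 2 threePt (tpow 2 threePt 1))]

/-!
`Ω¹_R` is generated over `R` by `dt` and `du`, and `u du = (t + 2) dt`. Modulo exact forms,
`tⁿ dt` is exact for `n ≠ -1`, and `τₙ = tⁿ u dt` satisfies `(n + 3) τₙ₊₁ + (4n + 6) τₙ ≡ 0`
(this is `d(tⁿ⁺² u + 4 tⁿ⁺¹ u)`), so every class is a combination of `[t⁻¹ dt]` and `[t⁻¹ u dt]`.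

For independence, contract with the vector field `ξ = t u ∂/∂t`: it sends `t⁻¹ dt ↦ u`,
`t⁻¹ u dt ↦ u² = t² + 4t` and exact forms into `ξ(R)`. Writing `R = ℂ[t^±] ⊕ ℂ[t^±] u`, two
functionals vanish on `ξ(R)`: the constant term of the `u`-coordinate, and the pairing of the
`1`-coordinate with the expansion of `1/u` at `t = ∞`. On the two classes they take the values
`(1, 0)` and `(0, 2)`.
-/

open Polynomial

namespace LaurentPolynomial

variable {R : Type*} [CommRing R]

def basisT : Module.Basis ℤ R R[T;T⁻¹] := AddMonoidAlgebra.basis ℤ R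

lemma basisT_apply (n : ℤ) : (basisT n : R[T;T⁻¹]) = T n := rfl

def eulerDerivation : Derivation R R[T;T⁻¹] R[T;T⁻¹] :=
  Derivation.mk' (basisT.constr R fun n : ℤ => n • (T n : R[T;T⁻¹])) fun a b => by
    set L := (basisT (R := R)).constr R fun n : ℤ => n • (T n : R[T;T⁻¹])
    have hL (n : ℤ) : L (T n) = n • T n := basisT.constr_basis R _ n
    refine LinearMap.congr_fun₂ (?_ : (LinearMap.mul R R[T;T⁻¹]).compr₂ L
      = (LinearMap.mul R _).compl₂ L + ((LinearMap.mul R _).compl₂ L).flip) a b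
    refine LinearMap.ext_basis basisT basisT fun m n => ?_
    simp only [basisT_apply, LinearMap.compr₂_apply, LinearMap.mul_apply', ← T_add, hL,
      LinearMap.add_apply, LinearMap.compl₂_apply, LinearMap.flip_apply]
    rw [mul_smul_comm, mul_smul_comm, ← T_add, ← T_add, add_comm n m, ← add_smul, add_comm n]

@[simp] lemma eulerDerivation_T (n : ℤ) : eulerDerivation (T n : R[T;T⁻¹]) = n • T n := by
  rw [eulerDerivation, Derivation.coe_mk']
  exact basisT.constr_basis R _ n

lemma coord_eulerDerivation (n : ℤ) (p : R[T;T⁻¹]) :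
    basisT.coord n (eulerDerivation p) = n • basisT.coord n p := by
  have : (basisT (R := R)).coord n ∘ₗ eulerDerivation.toLinearMap = n • basisT.coord n := by
    refine basisT.ext fun m => ?_
    show basisT.coord n (eulerDerivation (T m : R[T;T⁻¹])) = n • basisT.coord n (basisT m)
    rw [eulerDerivation_T, ← basisT_apply, map_zsmul, Module.Basis.coord_apply,
      Module.Basis.repr_self]
    rcases eq_or_ne m n with rfl | hmn
    · rfl
    · simp [hmn]
  exact LinearMap.congr_fun this p

end LaurentPolynomial

namespace AdjoinRoot

variable {A : Type*} [CommRing A] (w : A)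

local notation "Q" => AdjoinRoot (X ^ 2 - C w : A[X])

lemma root_sq : root (X ^ 2 - C w) ^ 2 = of _ w := by
  have := mk_self (f := X ^ 2 - C w)
  rwa [map_sub, map_pow, mk_X, mk_C, sub_eq_zero] at this

def isAdjoinRootMonicSq : IsAdjoinRootMonic Q (X ^ 2 - C w) :=
  AdjoinRoot.isAdjoinRootMonic _ (monic_X_pow_sub_C w two_ne_zero)

def coeffSq (i : ℕ) : Q →ₗ[A] A := LinearMap.proj i ∘ₗ (isAdjoinRootMonicSq w).coeff

variable [Nontrivial A]

lemma coeffSq_of_add_of_mul_root (f g : A) (i : ℕ) :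
    coeffSq w i (of _ f + of _ g * root _) = (Pi.single 0 f + Pi.single 1 g : ℕ → A) i := by
  have hcoeff (n : ℕ) (hn : n < 2) :
      (isAdjoinRootMonicSq w).coeff (root _ ^ n) = Pi.single n 1 := by
    rw [← isAdjoinRoot_root_eq_root]
    exact (isAdjoinRootMonicSq w).coeff_root_pow (by rwa [natDegree_X_pow_sub_C])
  have e : of (X ^ 2 - C w) f + of _ g * root _ = f • root _ ^ 0 + g • root _ ^ 1 := by
    rw [Algebra.smul_def, Algebra.smul_def, pow_zero, pow_one, mul_one]; rfl
  rw [coeffSq, LinearMap.comp_apply, e, map_add, map_smul, map_smul, hcoeff 0 two_pos,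
    hcoeff 1 one_lt_two]
  rcases i with _ | _ | i <;> simp

@[simp] lemma coeffSq_zero_of_add (f g : A) : coeffSq w 0 (of _ f + of _ g * root _) = f := by
  simp [coeffSq_of_add_of_mul_root]

@[simp] lemma coeffSq_one_of_add (f g : A) : coeffSq w 1 (of _ f + of _ g * root _) = g := by
  simp [coeffSq_of_add_of_mul_root]

@[simp] lemma coeffSq_zero_of (f : A) : coeffSq w 0 (of _ f) = f := by
  simpa using coeffSq_zero_of_add w f 0

@[simp] lemma coeffSq_one_of (f : A) : coeffSq w 1 (of _ f) = 0 := by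
  simpa using coeffSq_one_of_add w f 0

@[simp] lemma coeffSq_zero_root : coeffSq w 0 (root (X ^ 2 - C w)) = 0 := by
  simpa using coeffSq_zero_of_add w 0 1

@[simp] lemma coeffSq_one_root : coeffSq w 1 (root (X ^ 2 - C w)) = 1 := by
  simpa using coeffSq_one_of_add w 0 1

lemma of_coeffSq_add (x : Q) : of _ (coeffSq w 0 x) + of _ (coeffSq w 1 x) * root _ = x := by
  refine (isAdjoinRootMonicSq w).ext_elem fun i hi => ?_
  rw [natDegree_X_pow_sub_C] at hi
  have := coeffSq_of_add_of_mul_root w (coeffSq w 0 x) (coeffSq w 1 x) i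
  interval_cases i <;> simpa [coeffSq] using this

lemma exists_eq_of_add_of_mul_root (x : Q) : ∃ f g : A, x = of _ f + of _ g * root _ :=
  ⟨_, _, (of_coeffSq_add w x).symm⟩

variable {k : Type*} [CommRing k] [Algebra k A] (δ : Derivation k A A) (h : A)

def mulRootLinearMap : Q →ₗ[k] Q :=
  (Algebra.linearMap A Q).restrictScalars k ∘ₗ
      (LinearMap.mulRight k w ∘ₗ δ.toLinearMap + LinearMap.mulRight k h) ∘ₗ
        (coeffSq w 1).restrictScalars k +
    LinearMap.mulRight k (root (X ^ 2 - C w : A[X])) ∘ₗ (Algebra.linearMap A Q).restrictScalars k ∘ₗ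
      δ.toLinearMap ∘ₗ (coeffSq w 0).restrictScalars k

lemma mulRootLinearMap_of_add (f g : A) :
    mulRootLinearMap w δ h (of _ f + of _ g * root _)
      = of (X ^ 2 - C w) (δ g * w + g * h) + of _ (δ f) * root _ := by
  simp [mulRootLinearMap]

/-- For `u² = w` and `δ w = 2 h`, the derivation `u · δ̃`, where `δ̃` extends `δ` by
`δ̃ u = δ w / (2 u)`: it sends `a ↦ δ(a) u` and `u ↦ h`. -/
def mulRootDerivation (hδ : δ w = 2 * h) : Derivation k Q Q :=
  Derivation.mk' (mulRootLinearMap w δ h) fun x y => by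
    obtain ⟨f₁, g₁, rfl⟩ := exists_eq_of_add_of_mul_root w x
    obtain ⟨f₂, g₂, rfl⟩ := exists_eq_of_add_of_mul_root w y
    have hprod : (of _ f₁ + of _ g₁ * root _) * (of _ f₂ + of _ g₂ * root _)
        = of (X ^ 2 - C w) (f₁ * f₂ + g₁ * g₂ * w) + of _ (f₁ * g₂ + f₂ * g₁) * root _ := by
      simp only [map_add, map_mul, ← root_sq]; ring
    rw [hprod, mulRootLinearMap_of_add, mulRootLinearMap_of_add, mulRootLinearMap_of_add]
    simp only [Derivation.leibniz, smul_eq_mul, map_add, map_mul, hδ, map_ofNat]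
    linear_combination (-(of _ g₂ * of _ (δ f₁) + of _ g₁ * of _ (δ f₂))) * root_sq w

variable (hδ : δ w = 2 * h)

lemma mulRootDerivation_of_add (f g : A) :
    mulRootDerivation w δ h hδ (of _ f + of _ g * root _)
      = of (X ^ 2 - C w) (δ g * w + g * h) + of _ (δ f) * root _ :=
  mulRootLinearMap_of_add w δ h f g

lemma mulRootDerivation_of (f : A) :
    mulRootDerivation w δ h hδ (of _ f) = of (X ^ 2 - C w) (δ f) * root _ := by
  simpa using mulRootDerivation_of_add w δ h hδ f 0

lemma coeffSq_zero_mulRootDerivation (x : Q) :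
    coeffSq w 0 (mulRootDerivation w δ h hδ x) = δ (coeffSq w 1 x) * w + coeffSq w 1 x * h := by
  conv_lhs => rw [← of_coeffSq_add w x, mulRootDerivation_of_add, coeffSq_zero_of_add]

lemma coeffSq_one_mulRootDerivation (x : Q) :
    coeffSq w 1 (mulRootDerivation w δ h hδ x) = δ (coeffSq w 0 x) := by
  conv_lhs => rw [← of_coeffSq_add w x, mulRootDerivation_of_add, coeffSq_one_of_add]

end AdjoinRoot

namespace ThreePoint

open LaurentPolynomial AdjoinRoot

local notation "R" => SER 2 threePt
local notation "Ω¹" => KaehlerDifferential ℂ (SER 2 threePt)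
local notation "𝐭" => tpow 2 threePt
local notation "𝐮" => uu 2 threePt
local notation "𝐝" => Dd 2 threePt

lemma toLaurent_threePt : threePt.toLaurent = (T 2 + 4 * T 1 : LA) := by
  simp only [threePt, map_add, map_mul, map_pow, toLaurent_X, T_pow, map_ofNat]
  norm_num

lemma tpow_add (a b : ℤ) : 𝐭 (a + b) = 𝐭 a * 𝐭 b := by
  rw [tpow, tpow, tpow, T_add, map_mul]

lemma tpow_zero : 𝐭 0 = 1 := by
  simp [tpow]

lemma tpow_neg_one_mul_tpow_one : 𝐭 (-1) * 𝐭 1 = 1 := by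
  rw [← tpow_add, neg_add_cancel, tpow_zero]

lemma uu_sq : 𝐮 ^ 2 = 𝐭 2 + 4 * 𝐭 1 := by
  rw [uu, root_sq, tpow, tpow, ← map_ofNat (of _) 4, ← map_mul, ← map_add, ← toLaurent_threePt]

lemma exists_eq_of_add_of_mul_uu (x : R) : ∃ f g : LA, x = of _ f + of _ g * 𝐮 :=
  exists_eq_of_add_of_mul_root _ x

lemma of_C_mul_T (a : ℂ) (n : ℤ) : of _ (LaurentPolynomial.C a * T n) = a • 𝐭 n := by
  rw [← LaurentPolynomial.smul_eq_C_mul, tpow, Algebra.smul_def, Algebra.smul_def, map_mul]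
  rfl

/-- The vector field `t u ∂/∂t`: it sends `t ↦ t u` and `u ↦ t² + 2t`. -/
def derivation : Derivation ℂ R R :=
  mulRootDerivation threePt.toLaurent eulerDerivation (T 2 + 2 * T 1) <| by
    have h4 : eulerDerivation (4 : LA) = 0 := by simpa using eulerDerivation.map_natCast 4
    rw [toLaurent_threePt]
    simp [h4]
    ring

lemma derivation_tpow_one : derivation (𝐭 1) = 𝐭 1 * 𝐮 := by
  rw [tpow, derivation, mulRootDerivation_of, eulerDerivation_T, one_smul]
  rfl

/-- The coefficients of `t⁻¹ (1 + 4 t⁻¹)^(-1/2) = Σ_{k ≥ 1} c_k t^(-k)`, the expansion of `1/u` at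
`t = ∞`. -/
def invSqrtCoeff : ℤ → ℂ
  | .ofNat (n + 1) => (-1) ^ n * n.centralBinom
  | _ => 0

lemma invSqrtCoeff_of_nonpos {k : ℤ} (hk : k ≤ 0) : invSqrtCoeff k = 0 := by
  obtain (_ | n) | n := k
  · rfl
  · exact absurd hk (by simp)
  · rfl

lemma invSqrtCoeff_natCast_add_one (n : ℕ) :
    invSqrtCoeff (n + 1) = (-1) ^ n * n.centralBinom := rfl

lemma invSqrtCoeff_recurrence (n : ℤ) :
    (n + 1) * invSqrtCoeff (n + 2) + (4 * n + 2) * invSqrtCoeff (n + 1) = 0 := by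
  rcases lt_or_ge n 0 with hn | hn
  · rcases eq_or_lt_of_le (Int.le_sub_one_of_lt hn) with rfl | hn'
    · simp [invSqrtCoeff_of_nonpos]
    · rw [invSqrtCoeff_of_nonpos (by omega), invSqrtCoeff_of_nonpos (by omega)]
      ring
  · lift n to ℕ using hn
    have h : ((n : ℂ) + 1) * (n + 1).centralBinom = 2 * (2 * n + 1) * n.centralBinom := by
      exact_mod_cast Nat.succ_mul_centralBinom_succ n
    rw [show (n : ℤ) + 2 = (n + 1 : ℕ) + 1 by push_cast; ring, invSqrtCoeff_natCast_add_one,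
      invSqrtCoeff_natCast_add_one]
    push_cast
    linear_combination (-(-1 : ℂ) ^ n) * h

def constTermU : R →ₗ[ℂ] ℂ :=
  basisT.coord 0 ∘ₗ (coeffSq threePt.toLaurent 1).restrictScalars ℂ

def pairingInvSqrt : R →ₗ[ℂ] ℂ :=
  basisT.constr ℂ invSqrtCoeff ∘ₗ (coeffSq threePt.toLaurent 0).restrictScalars ℂ

lemma constTermU_derivation (x : R) : constTermU (derivation x) = 0 := by
  rw [constTermU, LinearMap.comp_apply, LinearMap.restrictScalars_apply, derivation,
    coeffSq_one_mulRootDerivation, coord_eulerDerivation, zero_smul]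

lemma eulerDerivation_T_mul_add (n : ℤ) :
    eulerDerivation (T n : LA) * (T 2 + 4 * T 1) + T n * (T 2 + 2 * T 1)
      = ((n : ℂ) + 1) • T (n + 2) + (4 * n + 2 : ℂ) • T (n + 1) := by
  simp only [eulerDerivation_T, T_add, LaurentPolynomial.smul_eq_C_mul, zsmul_eq_mul, map_add,
    map_mul, map_intCast, map_ofNat, map_one]
  ring

lemma pairingInvSqrt_derivation (x : R) : pairingInvSqrt (derivation x) = 0 := by
  have key : basisT.constr ℂ invSqrtCoeff ∘ₗ
      (LinearMap.mulRight ℂ threePt.toLaurent ∘ₗ eulerDerivation.toLinearMap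
        + LinearMap.mulRight ℂ (T 2 + 2 * T 1 : LA)) = 0 := by
    refine basisT.ext fun n => ?_
    simp only [LinearMap.comp_apply, LinearMap.add_apply, LinearMap.mulRight_apply,
      Derivation.coeFn_coe, basisT_apply, toLaurent_threePt, eulerDerivation_T_mul_add]
    simp only [map_add, map_smul, ← basisT_apply, Module.Basis.constr_basis, smul_eq_mul,
      LinearMap.zero_apply]
    linear_combination invSqrtCoeff_recurrence n
  have := LinearMap.congr_fun key (coeffSq threePt.toLaurent 1 x)
  simpa [pairingInvSqrt, derivation, coeffSq_zero_mulRootDerivation] using this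

lemma constTermU_uu : constTermU 𝐮 = 1 := by
  simp [constTermU, uu, ← T_zero, ← basisT_apply]

lemma constTermU_uu_sq : constTermU (𝐮 ^ 2) = 0 := by
  simp [constTermU, uu, root_sq]

lemma pairingInvSqrt_uu : pairingInvSqrt 𝐮 = 0 := by
  simp [pairingInvSqrt, uu]

lemma pairingInvSqrt_uu_sq : pairingInvSqrt (𝐮 ^ 2) = 2 := by
  have h4 : (4 : LA) * basisT 1 = (4 : ℂ) • basisT 1 := by
    rw [LaurentPolynomial.smul_eq_C_mul, map_ofNat LaurentPolynomial.C 4]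
  simp only [pairingInvSqrt, uu, root_sq, LinearMap.comp_apply, LinearMap.restrictScalars_apply,
    coeffSq_zero_of, toLaurent_threePt, h4, ← basisT_apply, map_add, map_smul,
    Module.Basis.constr_basis]
  norm_num [invSqrtCoeff, Nat.centralBinom, Nat.choose]

lemma liftKaehlerDifferential_smul_dt (r : R) :
    derivation.liftKaehlerDifferential (r • 𝐝 (𝐭 1)) = r * 𝐭 1 * 𝐮 := by
  rw [map_smul, Dd, Derivation.liftKaehlerDifferential_comp_D, derivation_tpow_one, smul_eq_mul,
    mul_assoc]

def liftQuot (μ : R →ₗ[ℂ] ℂ) (hμ : ∀ x, μ (derivation x) = 0) : OmQ 2 threePt →ₗ[ℂ] ℂ :=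
  (dR 2 threePt).liftQ (μ ∘ₗ derivation.liftKaehlerDifferential.restrictScalars ℂ) <| by
    rintro _ ⟨x, rfl⟩
    simp [Dd, hμ]

lemma liftQuot_cl_dt_div_t (μ : R →ₗ[ℂ] ℂ) (hμ : ∀ x, μ (derivation x) = 0) :
    liftQuot μ hμ (cl 2 threePt (𝐭 (-1) • 𝐝 (𝐭 1))) = μ 𝐮 := by
  show μ (derivation.liftKaehlerDifferential _) = _
  rw [liftKaehlerDifferential_smul_dt, ← tpow_add]
  simp [tpow_zero]

lemma liftQuot_cl_u_dt_div_t (μ : R →ₗ[ℂ] ℂ) (hμ : ∀ x, μ (derivation x) = 0) :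
    liftQuot μ hμ (cl 2 threePt ((𝐭 (-1) * 𝐮) • 𝐝 (𝐭 1))) = μ (𝐮 ^ 2) := by
  show μ (derivation.liftKaehlerDifferential _) = _
  rw [liftKaehlerDifferential_smul_dt, show 𝐭 (-1) * 𝐮 * 𝐭 1 * 𝐮 = 𝐭 (-1) * 𝐭 1 * 𝐮 ^ 2 by ring,
    ← tpow_add]
  simp [tpow_zero]

lemma linearIndependent_threePtFam : LinearIndependent ℂ threePtFam := by
  refine LinearIndependent.pair_iff.2 fun a b hab => ?_
  have hU := congrArg (liftQuot constTermU constTermU_derivation) hab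
  have hI := congrArg (liftQuot pairingInvSqrt pairingInvSqrt_derivation) hab
  simp only [map_add, map_smul, map_zero, liftQuot_cl_dt_div_t, liftQuot_cl_u_dt_div_t,
    constTermU_uu, constTermU_uu_sq, pairingInvSqrt_uu, pairingInvSqrt_uu_sq, smul_eq_mul] at hU hI
  constructor
  · simpa using hU
  · simpa using hI

lemma d_tpow (n : ℤ) : 𝐝 (𝐭 n) = (n : ℂ) • 𝐭 (n - 1) • 𝐝 (𝐭 1) := by
  induction n using Int.induction_on with
  | zero => simp [tpow_zero]
  | succ i ih =>
    have h : 𝐭 1 * 𝐭 (i - 1) = 𝐭 i := by rw [← tpow_add]; ring_nf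
    rw [tpow_add, Derivation.leibniz, ih, add_sub_cancel_right]
    push_cast
    linear_combination (norm := module) (i : ℂ) • h • 𝐝 (𝐭 1)
  | pred i ih =>
    have h : 𝐭 (-1) * 𝐭 (-i - 1) = 𝐭 (-i - 1 - 1) := by rw [← tpow_add]; ring_nf
    have h' : 𝐭 (-i) * 𝐭 (-1) ^ 2 = 𝐭 (-i - 1 - 1) := by
      rw [show 𝐭 (-1) ^ 2 = 𝐭 (-1) * 𝐭 (-1) from sq _, ← mul_assoc, ← tpow_add, ← tpow_add]
      ring_nf
    have e : 𝐭 (-i - 1) = 𝐭 (-i) * 𝐭 (-1) := by rw [← tpow_add]; ring_nf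
    have hinv : 𝐝 (𝐭 (-1)) = -𝐭 (-1) ^ 2 • 𝐝 (𝐭 1) :=
      Derivation.leibniz_of_mul_eq_one _ tpow_neg_one_mul_tpow_one
    rw [e, Derivation.leibniz, ih, hinv]
    push_cast
    linear_combination (norm := module) (-(i : ℂ)) • h • 𝐝 (𝐭 1) - h' • 𝐝 (𝐭 1)

lemma uu_smul_d_uu : 𝐮 • 𝐝 𝐮 = 𝐭 1 • 𝐝 (𝐭 1) + (2 : ℂ) • 𝐝 (𝐭 1) := by
  have h := congrArg 𝐝 (uu_sq.trans (by rw [Algebra.smul_def, map_ofNat]) :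
    𝐮 ^ 2 = 𝐭 2 + (4 : ℂ) • 𝐭 1)
  rw [Derivation.leibniz_pow, map_add, Derivation.map_smul, d_tpow 2] at h
  norm_num at h
  generalize 𝐮 • 𝐝 𝐮 = x at h ⊢
  generalize 𝐭 1 • 𝐝 (𝐭 1) = y at h ⊢
  linear_combination (norm := module) (1 / 2 : ℂ) • h

lemma d_of_mem_span (f : LA) : 𝐝 (of _ f : R) ∈ R ∙ 𝐝 (𝐭 1) := by
  induction f using LaurentPolynomial.induction_on' with
  | add p q hp hq => rw [map_add, map_add]; exact add_mem hp hq
  | C_mul_T n a =>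
    rw [of_C_mul_T, Derivation.map_smul, d_tpow n]
    exact Submodule.smul_of_tower_mem _ _ (Submodule.smul_of_tower_mem _ _
      (Submodule.smul_mem _ _ (Submodule.mem_span_singleton_self _)))

lemma span_d_tpow_one_d_uu : Submodule.span R {𝐝 (𝐭 1), 𝐝 𝐮} = ⊤ := by
  rw [eq_top_iff, ← KaehlerDifferential.span_range_derivation, Submodule.span_le]
  rintro _ ⟨x, rfl⟩
  obtain ⟨f, g, rfl⟩ := exists_eq_of_add_of_mul_uu x
  have hdt : R ∙ 𝐝 (𝐭 1) ≤ Submodule.span R {𝐝 (𝐭 1), 𝐝 𝐮} :=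
    Submodule.span_mono (by simp)
  have hdu : 𝐝 𝐮 ∈ Submodule.span R {𝐝 (𝐭 1), 𝐝 𝐮} := Submodule.subset_span (by simp)
  rw [map_add, Derivation.leibniz]
  exact add_mem (hdt (d_of_mem_span f))
    (add_mem (Submodule.smul_mem _ _ hdu) (Submodule.smul_mem _ _ (hdt (d_of_mem_span g))))

def spanClasses : Submodule ℂ Ω¹ :=
  (Submodule.span ℂ (Set.range threePtFam)).comap (dR 2 threePt).mkQ

local notation "W" => spanClasses

lemma d_mem_spanClasses (x : R) : 𝐝 x ∈ W := by
  change (dR 2 threePt).mkQ (𝐝 x) ∈ Submodule.span ℂ (Set.range threePtFam)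
  have hx : 𝐝 x ∈ dR 2 threePt := ⟨x, rfl⟩
  rw [Submodule.mkQ_apply, (Submodule.Quotient.mk_eq_zero _).2 hx]
  exact zero_mem _

lemma tpow_smul_dt_mem (n : ℤ) : 𝐭 n • 𝐝 (𝐭 1) ∈ W := by
  rcases eq_or_ne n (-1) with rfl | hn
  · exact Submodule.subset_span ⟨0, rfl⟩
  · have hn' : (n : ℂ) + 1 ≠ 0 := by exact_mod_cast (show n + 1 ≠ 0 by omega)
    have h := d_tpow (n + 1)
    rw [add_sub_cancel_right, Int.cast_add, Int.cast_one] at h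
    rw [← Submodule.smul_mem_iff _ hn', ← h]
    exact d_mem_spanClasses _

lemma tpow_mul_uu_relation (a : ℤ) :
    ((a : ℂ) + 3) • (𝐭 (a + 1) * 𝐮) • 𝐝 (𝐭 1) + (4 * (a : ℂ) + 6) • (𝐭 a * 𝐮) • 𝐝 (𝐭 1)
      = 𝐝 (𝐭 (a + 2) * 𝐮 + (4 : ℂ) • (𝐭 (a + 1) * 𝐮)) := by
  have hd (m : ℤ) : 𝐝 (𝐭 m * 𝐮) = 𝐭 m • 𝐝 𝐮 + (m : ℂ) • (𝐭 (m - 1) * 𝐮) • 𝐝 (𝐭 1) := by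
    rw [Derivation.leibniz, d_tpow]
    module
  have hu : 𝐭 (a + 2) • 𝐝 𝐮 + (4 : ℂ) • 𝐭 (a + 1) • 𝐝 𝐮
      = (𝐭 (a + 1) * 𝐮) • 𝐝 (𝐭 1) + (2 : ℂ) • (𝐭 a * 𝐮) • 𝐝 (𝐭 1) := by
    have h1 : 𝐭 (a + 1) = 𝐭 a * 𝐭 1 := tpow_add a 1
    have h2 : 𝐭 (a + 2) = 𝐭 a * 𝐭 2 := tpow_add a 2
    have hdu : (𝐭 a * 𝐮) • (𝐮 • 𝐝 𝐮) = (𝐭 a * 𝐮) • (𝐭 1 • 𝐝 (𝐭 1) + (2 : ℂ) • 𝐝 (𝐭 1)) := by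
      rw [uu_smul_d_uu]
    rw [h1, h2]
    linear_combination (norm := skip) hdu - (𝐭 a • uu_sq) • 𝐝 𝐮
    -- the complex numerals reach `R` as `algebraMap ℂ R n`, which `ring` does not evaluate
    match_scalars <;> simp only [map_ofNat] <;> ring
  rw [map_add, Derivation.map_smul, hd, hd, add_sub_cancel_right, show a + 2 - 1 = a + 1 by ring]
  push_cast
  -- with the `R`-multiples as atoms, `module` works over `ℂ` alone
  generalize 𝐭 (a + 2) • 𝐝 𝐮 = e₂ at hu ⊢
  generalize 𝐭 (a + 1) • 𝐝 𝐮 = e₁ at hu ⊢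
  generalize (𝐭 (a + 1) * 𝐮) • 𝐝 (𝐭 1) = v₁ at hu ⊢
  generalize (𝐭 a * 𝐮) • 𝐝 (𝐭 1) = v₀ at hu ⊢
  linear_combination (norm := module) -hu

lemma tpow_mul_uu_smul_dt_mem (n : ℤ) : (𝐭 n * 𝐮) • 𝐝 (𝐭 1) ∈ W := by
  have hrel (a : ℤ) : ((a : ℂ) + 3) • (𝐭 (a + 1) * 𝐮) • 𝐝 (𝐭 1)
      + (4 * (a : ℂ) + 6) • (𝐭 a * 𝐮) • 𝐝 (𝐭 1) ∈ W := by
    rw [tpow_mul_uu_relation]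
    exact d_mem_spanClasses _
  refine Int.inductionOn' n (-1) (Submodule.subset_span ⟨1, rfl⟩) (fun k hk ih => ?_)
    (fun k hk ih => ?_)
  · have hk3 : (k : ℂ) + 3 ≠ 0 := by exact_mod_cast (show k + 3 ≠ 0 by omega)
    exact (Submodule.smul_mem_iff _ hk3).1
      ((Submodule.add_mem_iff_left _ (Submodule.smul_mem _ _ ih)).1 (hrel k))
  · have hk4 : 4 * ((k - 1 : ℤ) : ℂ) + 6 ≠ 0 := by
      exact_mod_cast (show 4 * (k - 1) + 6 ≠ 0 by omega)
    have h := hrel (k - 1)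
    rw [sub_add_cancel] at h
    exact (Submodule.smul_mem_iff _ hk4).1
      ((Submodule.add_mem_iff_right _ (Submodule.smul_mem _ _ ih)).1 h)

lemma of_smul_mem {v : Ω¹} (h : ∀ n, 𝐭 n • v ∈ W) (f : LA) : (of _ f : R) • v ∈ W := by
  induction f using LaurentPolynomial.induction_on' with
  | add p q hp hq => rw [map_add, add_smul]; exact add_mem hp hq
  | C_mul_T n a => rw [of_C_mul_T, smul_assoc]; exact Submodule.smul_mem _ a (h n)

lemma smul_dt_mem (r : R) : r • 𝐝 (𝐭 1) ∈ W := by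
  obtain ⟨f, g, rfl⟩ := exists_eq_of_add_of_mul_uu r
  rw [add_smul, mul_smul]
  refine add_mem (of_smul_mem tpow_smul_dt_mem f) (of_smul_mem (fun n => ?_) g)
  rw [← mul_smul]
  exact tpow_mul_uu_smul_dt_mem n

lemma smul_d_uu_mem (r : R) : r • 𝐝 𝐮 ∈ W := by
  obtain ⟨f, g, rfl⟩ := exists_eq_of_add_of_mul_uu r
  obtain ⟨s, hs⟩ := Submodule.mem_span_singleton.1 (d_of_mem_span f)
  have hf : (of _ f : R) • 𝐝 𝐮 = 𝐝 (of _ f * 𝐮) - (𝐮 * s) • 𝐝 (𝐭 1) := by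
    rw [Derivation.leibniz, ← hs, mul_smul]
    abel
  rw [add_smul, hf, mul_smul (of _ g : R), uu_smul_d_uu, smul_add, smul_comm _ (2 : ℂ),
    ← mul_smul]
  exact add_mem (sub_mem (d_mem_spanClasses _) (smul_dt_mem _))
    (add_mem (smul_dt_mem _) (Submodule.smul_mem _ _ (smul_dt_mem _)))

lemma span_threePtFam : Submodule.span ℂ (Set.range threePtFam) = ⊤ := by
  rw [eq_top_iff]
  rintro q -
  obtain ⟨ω, rfl⟩ := Submodule.mkQ_surjective _ q
  obtain ⟨a, b, rfl⟩ :=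
    Submodule.mem_span_pair.1 (span_d_tpow_one_d_uu.ge (Submodule.mem_top (x := ω)))
  exact (add_mem (smul_dt_mem a) (smul_d_uu_mem b) : _ ∈ W)

end ThreePoint

theorem stmt17 :
    LinearIndependent ℂ threePtFam
      ∧ Submodule.span ℂ (Set.range threePtFam) = ⊤
      ∧ Module.finrank ℂ (OmQ 2 threePt) = 2 := by
  have hli := ThreePoint.linearIndependent_threePtFam
  have hsp := ThreePoint.span_threePtFam
  refine ⟨hli, hsp, ?_⟩
  rw [Module.finrank_eq_card_basis (Module.Basis.mk hli hsp.ge), Fintype.card_fin]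
end
end
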